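/- Let L = T^{⊕3} − 3·1 be the intensity matrix of the random single-bit-flip process on 3 bits, V the repetition-code encoding, R the majority-vote recovery, and L_c = r(R − 1) for r > 0. Then R ∘ e^{t(L + L_c)} ∘ V = α(t,r)·V + (1 − α(t,r))·S for some stochastic matrix S and α(t,r) ∈ [0,1], and for each fixed t > 0, the maximal such α(t,r) → 1 as r → ∞. -/

import Mathlib

open Matrix Filter

/-- Flip of the i-th bit, as an 8×8 permutation matrix on states of 3 bits. -/
def flip3 (i : Fin 3) : Matrix (Fin 3 → Bool) (Fin 3 → Bool) ℝ :=
  fun f g => if f = Function.update g i (!(g i)) then 1 else 0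

/-- Transition matrix flipping a uniformly chosen bit (sum of the three flips). -/
def T3 : Matrix (Fin 3 → Bool) (Fin 3 → Bool) ℝ := ∑ i, flip3 i

/-- Majority of three bits. -/
def maj (f : Fin 3 → Bool) : Bool := (f 0 && f 1) || (f 0 && f 2) || (f 1 && f 2)

/-- Majority-vote recovery matrix. -/
def Rmaj : Matrix (Fin 3 → Bool) (Fin 3 → Bool) ℝ :=
  fun f g => if f = (fun _ => maj g) then 1 else 0

/-- Repetition-code encoding 0 ↦ 000, 1 ↦ 111. -/
def Venc : Matrix (Fin 3 → Bool) Bool ℝ :=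
  fun f b => if f = (fun _ => b) then 1 else 0

/-- Matrix exponential via its power series. -/
noncomputable def mexp {ι : Type} [Fintype ι] [DecidableEq ι] (A : Matrix ι ι ℝ) : Matrix ι ι ℝ :=
  ∑' k : ℕ, ((Nat.factorial k : ℝ))⁻¹ • A ^ k

/-- Column-stochastic matrix. -/
def IsStochastic {ι κ : Type} [Fintype ι] (S : Matrix ι κ ℝ) : Prop :=
  (∀ i j, 0 ≤ S i j) ∧ ∀ j, ∑ i, S i j = 1

/-- The set of admissible coefficients α(t,r) in the decomposition
    R ∘ e^{t(L+L_c)} ∘ V = α V + (1-α) S. -/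
def alphaSet (t r : ℝ) : Set ℝ :=
  {α | 0 ≤ α ∧ α ≤ 1 ∧ ∃ S : Matrix (Fin 3 → Bool) Bool ℝ, IsStochastic S ∧
    Rmaj * mexp (t • ((T3 - (3 : ℝ) • 1) + r • (Rmaj - 1))) * Venc
      = α • Venc + (1 - α) • S}

/-!
Uniformization: if `Q` is an intensity matrix, then `N = Q + c • 1` is entrywise nonnegative for
large `c`, all its column sums equal `c`, and `exp Q = exp (-c) • exp N`. The power series of
`exp N` has nonnegative terms, so `exp Q` is stochastic; and a potential `w` with drift
`w ᵥ* Q ≤ ε` satisfies `w ᵥ* N ^ k ≤ c ^ k • w + k c ^ (k - 1) ε`, which sums to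
`w ᵥ* exp Q ≤ w + ε`.

For the repetition code take the potential that is `1` on states with the wrong majority, `0` on
the codeword and `2 / (3 + r)` on the one-error states. Its drift under `L + L_c` is at most
`6 / (3 + r)`, so from a codeword majority vote fails at time `t` with probability at most
`6 t / (3 + r)`. Hence `R e^{t(L+L_c)} V ≥ (1 - 6 t / (3 + r)) V` entrywise, which yields the
decomposition with `α = max 0 (1 - 6 t / (3 + r)) → 1`.
-/

open scoped Nat

section IntensityMatrix
variable {ι : Type} [Fintype ι] [DecidableEq ι]

lemma mexp_eq_exp (A : Matrix ι ι ℝ) : mexp A = NormedSpace.exp A := by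
  rw [NormedSpace.exp_eq_tsum ℝ]; rfl

lemma Matrix.exp_smul_one (c : ℝ) : NormedSpace.exp (c • (1 : Matrix ι ι ℝ)) = Real.exp c • 1 := by
  rw [smul_one_eq_diagonal, smul_one_eq_diagonal, exp_diagonal, Pi.exp_def, Real.exp_eq_exp_ℝ]

open scoped Matrix.Norms.Operator in
lemma Matrix.hasSum_exp_apply (A : Matrix ι ι ℝ) (i j : ι) :
    HasSum (fun n => (n ! : ℝ)⁻¹ * (A ^ n) i j) (NormedSpace.exp A i j) :=
  Pi.hasSum.mp (Pi.hasSum.mp (NormedSpace.exp_series_hasSum_exp' (𝕂 := ℝ) A) i) j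

lemma Matrix.hasSum_vecMul_exp (A : Matrix ι ι ℝ) (w : ι → ℝ) (j : ι) :
    HasSum (fun n => (n ! : ℝ)⁻¹ * (w ᵥ* A ^ n) j) ((w ᵥ* NormedSpace.exp A) j) := by
  simpa [vecMul, dotProduct, Finset.mul_sum, mul_left_comm] using
    hasSum_sum (s := Finset.univ) fun i _ => (hasSum_exp_apply A i j).mul_left (w i)

lemma Real.hasSum_mul_pow_pred_div_factorial (c : ℝ) :
    HasSum (fun n : ℕ => (n ! : ℝ)⁻¹ * (n * c ^ (n - 1))) (Real.exp c) := by
  rw [← hasSum_nat_add_iff' 1]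
  simp only [Finset.range_one, Finset.sum_singleton, CharP.cast_eq_zero, zero_mul, mul_zero,
    sub_zero, Real.exp_eq_exp_ℝ]
  refine (NormedSpace.expSeries_div_hasSum_exp c).congr_fun fun n => ?_
  push_cast [Nat.factorial_succ, Nat.add_sub_cancel]
  field_simp

omit [DecidableEq ι] in
lemma Matrix.vecMul_le_vecMul_of_nonneg {N : Matrix ι ι ℝ} (hN : ∀ i j, 0 ≤ N i j) {u v : ι → ℝ}
    (huv : u ≤ v) : u ᵥ* N ≤ v ᵥ* N :=
  fun j => Finset.sum_le_sum fun i _ => mul_le_mul_of_nonneg_right (huv i) (hN i j)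

section Uniformized
variable {N : Matrix ι ι ℝ} {c ε : ℝ} {w : ι → ℝ}

lemma Matrix.vecMul_pow_le (hN : ∀ i j, 0 ≤ N i j) (hc : 0 ≤ c) (hN1 : 1 ᵥ* N = c • 1)
    (hw : w ᵥ* N ≤ c • w + ε • 1) (k : ℕ) :
    w ᵥ* N ^ k ≤ c ^ k • w + (k * c ^ (k - 1) * ε) • 1 := by
  induction k with
  | zero => simp
  | succ k ih =>
    calc w ᵥ* N ^ (k + 1) = (w ᵥ* N ^ k) ᵥ* N := by rw [pow_succ, vecMul_vecMul]
      _ ≤ (c ^ k • w + (k * c ^ (k - 1) * ε) • 1) ᵥ* N := vecMul_le_vecMul_of_nonneg hN ih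
      _ = c ^ k • (w ᵥ* N) + (k * c ^ (k - 1) * ε * c) • 1 := by
        rw [add_vecMul, smul_vecMul, smul_vecMul, hN1, smul_smul]
      _ ≤ c ^ k • (c • w + ε • 1) + (k * c ^ (k - 1) * ε * c) • 1 := by
        gcongr
      _ = c ^ (k + 1) • w + ((k + 1 : ℕ) * c ^ (k + 1 - 1) * ε) • 1 := by
        ext j
        simp only [Pi.add_apply, Pi.smul_apply, smul_eq_mul, Pi.one_apply, mul_one]
        rcases k with _ | k <;> push_cast [Nat.add_sub_cancel, pow_succ] <;> ring

lemma Matrix.vecMul_exp_le (hN : ∀ i j, 0 ≤ N i j) (hc : 0 ≤ c) (hN1 : 1 ᵥ* N = c • 1)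
    (hw : w ᵥ* N ≤ c • w + ε • 1) :
    w ᵥ* NormedSpace.exp N ≤ Real.exp c • (w + ε • 1) := by
  intro j
  have hbound : HasSum (fun n : ℕ => (n ! : ℝ)⁻¹ * (c ^ n * w j + n * c ^ (n - 1) * ε))
      (Real.exp c * w j + Real.exp c * ε) := by
    refine (((Real.exp_eq_exp_ℝ ▸ NormedSpace.expSeries_div_hasSum_exp c).mul_right (w j)).add
      ((Real.hasSum_mul_pow_pred_div_factorial c).mul_right ε)).congr_fun fun n => ?_
    ring
  refine (hasSum_le (fun n => ?_) (hasSum_vecMul_exp N w j) hbound).trans_eq ?_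
  · have := vecMul_pow_le hN hc hN1 hw n j
    simp only [Pi.add_apply, Pi.smul_apply, smul_eq_mul, Pi.one_apply, mul_one] at this
    gcongr
  · simp only [Pi.smul_apply, Pi.add_apply, Pi.one_apply, smul_eq_mul, mul_one]
    ring

end Uniformized

lemma mexp_eq_smul_exp_add_smul_one (Q : Matrix ι ι ℝ) (c : ℝ) :
    mexp Q = Real.exp (-c) • NormedSpace.exp (Q + c • 1) := by
  rw [mexp_eq_exp, ← one_mul (NormedSpace.exp (Q + c • 1)), ← smul_mul_assoc, ← exp_smul_one,
    ← Matrix.exp_add_of_commute _ _ ((Commute.one_left _).smul_left _)]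
  congr 1
  module

def IsIntensityMatrix (Q : Matrix ι ι ℝ) : Prop :=
  (∀ i j, i ≠ j → 0 ≤ Q i j) ∧ 1 ᵥ* Q = 0

namespace IsIntensityMatrix
variable {Q : Matrix ι ι ℝ}

omit [DecidableEq ι] in
lemma zero : IsIntensityMatrix (0 : Matrix ι ι ℝ) :=
  ⟨fun _ _ _ => le_rfl, vecMul_zero 1⟩

omit [DecidableEq ι] in
lemma add {Q' : Matrix ι ι ℝ} (hQ : IsIntensityMatrix Q) (hQ' : IsIntensityMatrix Q') :
    IsIntensityMatrix (Q + Q') :=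
  ⟨fun i j hij => add_nonneg (hQ.1 i j hij) (hQ'.1 i j hij),
    by rw [vecMul_add, hQ.2, hQ'.2, add_zero]⟩

omit [DecidableEq ι] in
lemma smul (hQ : IsIntensityMatrix Q) {t : ℝ} (ht : 0 ≤ t) : IsIntensityMatrix (t • Q) :=
  ⟨fun i j hij => mul_nonneg ht (hQ.1 i j hij), by rw [vecMul_smul, hQ.2, smul_zero]⟩

lemma exists_nonneg_add_smul_one (hQ : IsIntensityMatrix Q) :
    ∃ c : ℝ, 0 ≤ c ∧ ∀ i j, 0 ≤ (Q + c • 1) i j := by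
  refine ⟨∑ i, |Q i i|, by positivity, fun i j => ?_⟩
  rcases eq_or_ne i j with rfl | hij
  · have := Finset.single_le_sum (fun k _ => abs_nonneg (Q k k)) (Finset.mem_univ i)
    simp only [Matrix.add_apply, Matrix.smul_apply, one_apply_eq, smul_eq_mul, mul_one]
    linarith [neg_abs_le (Q i i)]
  · simpa [one_apply_ne hij] using hQ.1 i j hij

lemma vecMul_mexp_le (hQ : IsIntensityMatrix Q) {w : ι → ℝ} {ε : ℝ} (hw : w ᵥ* Q ≤ ε • 1) :
    w ᵥ* mexp Q ≤ w + ε • 1 := by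
  obtain ⟨c, hc, hN⟩ := hQ.exists_nonneg_add_smul_one
  have hN1 : 1 ᵥ* (Q + c • 1) = c • 1 := by rw [vecMul_add, hQ.2, vecMul_smul, vecMul_one, zero_add]
  have hwN : w ᵥ* (Q + c • 1) ≤ c • w + ε • 1 := by
    rw [vecMul_add, vecMul_smul, vecMul_one, add_comm]
    exact add_le_add_right hw _
  rw [mexp_eq_smul_exp_add_smul_one Q c, vecMul_smul]
  calc Real.exp (-c) • (w ᵥ* NormedSpace.exp (Q + c • 1))
      ≤ Real.exp (-c) • (Real.exp c • (w + ε • 1)) :=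
        smul_le_smul_of_nonneg_left (vecMul_exp_le hN hc hN1 hwN) (Real.exp_nonneg _)
    _ = w + ε • 1 := by rw [smul_smul, ← Real.exp_add, neg_add_cancel, Real.exp_zero, one_smul]

lemma isStochastic_mexp (hQ : IsIntensityMatrix Q) : IsStochastic (mexp Q) := by
  obtain ⟨c, -, hN⟩ := hQ.exists_nonneg_add_smul_one
  refine ⟨fun i j => ?_, fun j => ?_⟩
  · rw [mexp_eq_smul_exp_add_smul_one Q c, Matrix.smul_apply, smul_eq_mul]
    exact mul_nonneg (Real.exp_nonneg _) <| (hasSum_exp_apply _ i j).nonneg fun n =>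
      mul_nonneg (by positivity) (Matrix.pow_apply_nonneg hN n i j)
  · -- the column sums are pinned down by the bound for the potentials `1` and `-1`
    have hle := hQ.vecMul_mexp_le (w := 1) (ε := 0) (by simp [hQ.2])
    have hge := hQ.vecMul_mexp_le (w := -1) (ε := 0) (by simp [neg_vecMul, hQ.2])
    have := le_antisymm (by simpa using hle j) (by simpa [neg_vecMul] using hge j)
    simpa [vecMul, dotProduct] using this

end IsIntensityMatrix

end IntensityMatrix

section Stochastic
variable {ι κ μ : Type} [Fintype ι]

def deterministicMatrix [DecidableEq ι] (σ : κ → ι) : Matrix ι κ ℝ :=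
  fun i j => if i = σ j then 1 else 0

lemma isStochastic_deterministicMatrix [DecidableEq ι] (σ : κ → ι) :
    IsStochastic (deterministicMatrix σ) :=
  ⟨fun _ _ => by unfold deterministicMatrix; positivity, fun j => by simp [deterministicMatrix]⟩

lemma vecMul_deterministicMatrix [DecidableEq ι] (w : ι → ℝ) (σ : κ → ι) :
    w ᵥ* deterministicMatrix σ = fun j => w (σ j) := by
  ext j
  simp [deterministicMatrix, vecMul, dotProduct]

lemma mul_deterministicMatrix_apply [DecidableEq ι] (A : Matrix κ ι ℝ) (σ : μ → ι) (i : κ)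
    (j : μ) : (A * deterministicMatrix σ) i j = A i (σ j) := by
  simp [deterministicMatrix, mul_apply]

lemma IsStochastic.mul [Fintype κ] {A : Matrix ι κ ℝ} {B : Matrix κ μ ℝ} (hA : IsStochastic A)
    (hB : IsStochastic B) : IsStochastic (A * B) := by
  refine ⟨fun i j => Finset.sum_nonneg fun k _ => mul_nonneg (hA.1 i k) (hB.1 k j), fun j => ?_⟩
  simp only [mul_apply]
  rw [Finset.sum_comm]
  simp [← Finset.sum_mul, hA.2, hB.2]

lemma IsStochastic.isIntensityMatrix_sub_one [DecidableEq ι] {S : Matrix ι ι ℝ}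
    (hS : IsStochastic S) : IsIntensityMatrix (S - 1) := by
  refine ⟨fun i j hij => by simpa [one_apply_ne hij] using hS.1 i j, ?_⟩
  ext j
  simp [vecMul, dotProduct, one_apply, hS.2]

lemma IsStochastic.exists_eq_smul_add_smul {M V : Matrix ι κ ℝ} (hM : IsStochastic M)
    (hV : IsStochastic V) {a : ℝ} (ha : a < 1) (hVM : ∀ i j, a * V i j ≤ M i j) :
    ∃ S, IsStochastic S ∧ M = a • V + (1 - a) • S := by
  have h1a : 1 - a ≠ 0 := (sub_pos.mpr ha).ne'
  refine ⟨(1 - a)⁻¹ • (M - a • V), ⟨fun i j => ?_, fun j => ?_⟩, ?_⟩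
  · simpa using mul_nonneg (inv_nonneg.mpr (sub_pos.mpr ha).le) (sub_nonneg.mpr (hVM i j))
  · simp [← Finset.mul_sum, Finset.sum_sub_distrib, hM.2, hV.2, h1a]
  · rw [smul_smul, mul_inv_cancel₀ h1a, one_smul, add_sub_cancel]

end Stochastic

section RepetitionCode

lemma flip3_eq (i : Fin 3) : flip3 i = deterministicMatrix fun g => Function.update g i (!g i) :=
  rfl

lemma Rmaj_eq : Rmaj = deterministicMatrix fun g _ => maj g := rfl

lemma Venc_eq : Venc = deterministicMatrix fun b _ => b := rfl

lemma isStochastic_Rmaj : IsStochastic Rmaj := isStochastic_deterministicMatrix _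

lemma isStochastic_Venc : IsStochastic Venc := isStochastic_deterministicMatrix _

def correctedGenerator (r : ℝ) : Matrix (Fin 3 → Bool) (Fin 3 → Bool) ℝ :=
  (T3 - (3 : ℝ) • 1) + r • (Rmaj - 1)

lemma isIntensityMatrix_correctedGenerator {r : ℝ} (hr : 0 ≤ r) :
    IsIntensityMatrix (correctedGenerator r) := by
  have hL : T3 - (3 : ℝ) • 1 = ∑ i, (flip3 i - 1) := by
    simp [T3, Finset.sum_sub_distrib, ← Nat.cast_smul_eq_nsmul ℝ]
  refine .add ?_ (isStochastic_Rmaj.isIntensityMatrix_sub_one.smul hr)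
  rw [hL]
  exact Finset.sum_induction _ IsIntensityMatrix (fun _ _ => .add) .zero fun i _ =>
    (flip3_eq i ▸ isStochastic_deterministicMatrix _).isIntensityMatrix_sub_one

lemma vecMul_correctedGenerator_apply (w : (Fin 3 → Bool) → ℝ) (r : ℝ) (g : Fin 3 → Bool) :
    (w ᵥ* correctedGenerator r) g =
      ∑ i, w (Function.update g i (!g i)) - 3 * w g + r * (w (fun _ => maj g) - w g) := by
  simp [correctedGenerator, T3, flip3_eq, Rmaj_eq, vecMul_add, vecMul_sub, vecMul_smul,
    vecMul_sum, vecMul_deterministicMatrix]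

/-- `κ = 2 / (3 + r)` on one-error states makes the drift vanish there: two of the three flips
lead to a logical error and recovery at rate `r` leads back to the codeword, so the drift is
`2 - (3 + r) κ`. The drift is then largest at the codeword itself, where it is `3 κ`. -/
noncomputable def majorityPotential (r : ℝ) (b : Bool) (f : Fin 3 → Bool) : ℝ :=
  if maj f ≠ b then 1 else if f = (fun _ => b) then 0 else 2 / (3 + r)

lemma majorityPotential_codeword (r : ℝ) (b : Bool) :
    majorityPotential r b (fun _ => b) = 0 := by
  cases b <;> simp +decide [majorityPotential]

lemma majorityPotential_nonneg {r : ℝ} (hr : 0 ≤ r) (b : Bool) (f : Fin 3 → Bool) :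
    0 ≤ majorityPotential r b f := by
  unfold majorityPotential
  split_ifs <;> positivity

lemma one_le_majorityPotential {r : ℝ} {b : Bool} {f : Fin 3 → Bool} (hf : maj f ≠ b) :
    1 ≤ majorityPotential r b f := by
  simp [majorityPotential, hf]

lemma majorityPotential_vecMul_correctedGenerator_le {r : ℝ} (hr : 0 ≤ r) (b : Bool) :
    majorityPotential r b ᵥ* correctedGenerator r ≤ (6 / (3 + r)) • 1 := by
  intro g
  rw [vecMul_correctedGenerator_apply]
  obtain ⟨x, y, z, rfl⟩ : ∃ x y z, g = ![x, y, z] :=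
    ⟨g 0, g 1, g 2, by funext i; fin_cases i <;> rfl⟩
  have h3r : (0 : ℝ) < 3 + r := by linarith
  have hκ0 : 0 ≤ 2 / (3 + r) := by positivity
  have hκ1 : 2 / (3 + r) ≤ 1 := by rw [div_le_one h3r]; linarith
  have hκ : (3 + r) * (2 / (3 + r)) = 2 := mul_div_cancel₀ _ h3r.ne'
  have h6 : 6 / (3 + r) = 3 * (2 / (3 + r)) := by ring
  simp only [Fin.sum_univ_three]
  cases x <;> cases y <;> cases z <;> cases b <;>
    simp +decide [majorityPotential] <;> linarith

lemma one_sub_vecMul_le_Rmaj_mul_mul_Venc_apply {P : Matrix (Fin 3 → Bool) (Fin 3 → Bool) ℝ}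
    (hP : IsStochastic P) {w : (Fin 3 → Bool) → ℝ} {b : Bool} (hw0 : ∀ f, 0 ≤ w f)
    (hw1 : ∀ f, maj f ≠ b → 1 ≤ w f) :
    1 - (w ᵥ* P) (fun _ => b) ≤ (Rmaj * P * Venc) (fun _ => b) b := by
  have hdiag : (Rmaj * P * Venc) (fun _ => b) b =
      ∑ h, (if maj h = b then 1 else 0) * P h (fun _ => b) := by
    rw [Venc_eq, mul_deterministicMatrix_apply, mul_apply]
    simp [Rmaj, funext_iff, eq_comm]
  calc 1 - (w ᵥ* P) (fun _ => b)
      = ∑ h, (P h (fun _ => b) - w h * P h (fun _ => b)) := by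
        rw [Finset.sum_sub_distrib, hP.2]; rfl
    _ ≤ _ := by
      rw [hdiag]
      refine Finset.sum_le_sum fun h _ => ?_
      have hPh := hP.1 h (fun _ => b)
      by_cases hh : maj h = b
      · simp only [hh, if_true, one_mul]; nlinarith [hw0 h]
      · simp only [hh, if_false, zero_mul]; nlinarith [hw1 h hh]

lemma one_sub_le_Rmaj_mul_mexp_mul_Venc_apply {t r : ℝ} (ht : 0 ≤ t) (hr : 0 ≤ r) (b : Bool) :
    1 - 6 * t / (3 + r) ≤
      (Rmaj * mexp (t • correctedGenerator r) * Venc) (fun _ => b) b := by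
  have hQ := (isIntensityMatrix_correctedGenerator hr).smul ht
  have hdrift : majorityPotential r b ᵥ* (t • correctedGenerator r) ≤ (6 * t / (3 + r)) • 1 := by
    rw [vecMul_smul, show 6 * t / (3 + r) = t * (6 / (3 + r)) by ring, mul_smul]
    exact smul_le_smul_of_nonneg_left (majorityPotential_vecMul_correctedGenerator_le hr b) ht
  have hbound := hQ.vecMul_mexp_le hdrift (fun _ => b)
  simp only [Pi.add_apply, majorityPotential_codeword, Pi.smul_apply, Pi.one_apply,
    smul_eq_mul, mul_one, zero_add] at hbound
  refine le_trans ?_ (one_sub_vecMul_le_Rmaj_mul_mul_Venc_apply hQ.isStochastic_mexp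
    (majorityPotential_nonneg hr b) fun f hf => one_le_majorityPotential hf)
  linarith

lemma max_mem_alphaSet {t r : ℝ} (ht : 0 < t) (hr : 0 ≤ r) :
    max 0 (1 - 6 * t / (3 + r)) ∈ alphaSet t r := by
  have hM : IsStochastic (Rmaj * mexp (t • correctedGenerator r) * Venc) :=
    (isStochastic_Rmaj.mul
      ((isIntensityMatrix_correctedGenerator hr).smul ht.le).isStochastic_mexp).mul
      isStochastic_Venc
  have hlt : max 0 (1 - 6 * t / (3 + r)) < 1 :=
    max_lt one_pos (sub_lt_self 1 (by positivity))
  obtain ⟨S, hS, hMS⟩ := hM.exists_eq_smul_add_smul isStochastic_Venc hlt fun f b => by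
    by_cases hf : f = fun _ => b
    · subst hf
      simpa [Venc] using
        max_le (hM.1 _ _) (one_sub_le_Rmaj_mul_mexp_mul_Venc_apply ht.le hr b)
    · simpa [Venc, hf] using hM.1 f b
  exact ⟨le_max_left _ _, hlt.le, S, hS, hMS⟩

end RepetitionCode

theorem classical_continuous_error_correction :
    (∀ t r : ℝ, 0 < t → 0 < r → (alphaSet t r).Nonempty) ∧
    ∀ t : ℝ, 0 < t → Tendsto (fun r => sSup (alphaSet t r)) atTop (nhds 1) := by
  refine ⟨fun t r ht hr => ⟨_, max_mem_alphaSet ht hr.le⟩, fun t ht => ?_⟩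
  have hlower : Tendsto (fun r : ℝ => 1 - 6 * t / (3 + r)) atTop (nhds 1) := by
    simpa using (tendsto_const_nhds (x := (1 : ℝ))).sub <|
      (tendsto_const_nhds (x := 6 * t)).div_atTop (tendsto_atTop_add_const_left _ 3 tendsto_id)
  refine tendsto_of_tendsto_of_tendsto_of_le_of_le' hlower tendsto_const_nhds ?_ ?_ <;>
    filter_upwards [eventually_ge_atTop 0] with r hr
  · exact (le_max_right _ _).trans (le_csSup ⟨1, fun _ h => h.2.1⟩ (max_mem_alphaSet ht hr))
  · exact csSup_le ⟨_, max_mem_alphaSet ht hr⟩ fun _ h => h.2.1
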